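/- Let G be a tree on n vertices, let e be a balanced edge of G, let C be a largest component of G \ e, and let c be the endpoint of e lying in C. If |V(C)| ≥ 2n/3, then c is a centroid of C. -/

import Mathlib

/-- The subgraph of `G` obtained by deleting the edge `uv`. -/
noncomputable def delEdge {V : Type*} (G : SimpleGraph V) (u v : V) : SimpleGraph V :=
  G.deleteEdges {s(u, v)}

/-- The weight (size of the larger of the two components) of the cut given by
the edge `uv` of a tree `G`. -/
noncomputable def cutWeight {V : Type*} (G : SimpleGraph V) (u v : V) : ℕ :=
  max ((delEdge G u v).connectedComponentMk u).supp.ncard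
      ((delEdge G u v).connectedComponentMk v).supp.ncard

/-!
A component `K` of `C - v` is attached to `v` through a neighbour `w ∈ K`, and since the tree
edge `vw` is a bridge, deleting it cuts off exactly `K`; the other side has at most `n - |K|`
vertices. As `|K| < |C| ≤ cutWeight(uv) ≤ cutWeight(vw)`, balancedness forces
`|C| ≤ n - |K|`, so `2|K| ≤ 2(n - |C|) ≤ |C|` because `3|C| ≥ 2n`.
-/

namespace SimpleGraph

variable {V : Type*} {G : SimpleGraph V} {u v : V} {C : Set V}

lemma ncard_supp_add_ncard_supp_le [Finite V] {H : SimpleGraph V} {a b : V}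
    (h : ¬ H.Reachable a b) :
    (H.connectedComponentMk a).supp.ncard + (H.connectedComponentMk b).supp.ncard
      ≤ Nat.card V := by
  have hne : H.connectedComponentMk a ≠ H.connectedComponentMk b :=
    fun hab ↦ h (ConnectedComponent.eq.mp hab)
  rw [← Set.ncard_union_eq (H.pairwise_disjoint_supp_connectedComponent hne)]
  exact Set.ncard_le_card _

lemma ConnectedComponent.ncard_supp_lt_ncard [Finite V] {s t : Set V} (hst : s ⊂ t)
    {H : SimpleGraph s} (K : H.ConnectedComponent) : K.supp.ncard < t.ncard :=
  (Set.ncard_le_card _).trans_lt (Set.ncard_lt_ncard hst)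

lemma Walk.reachable_deleteEdges_of_notMem_support {x y a : V} {e : Sym2 V} (p : G.Walk x y)
    (ha : a ∉ p.support) (hae : a ∈ e) : (G.deleteEdges {e}).Reachable x y := by
  refine (p.toDeleteEdge e fun he ↦ ha ?_).reachable
  induction e using Sym2.ind with
  | h b c =>
    rcases Sym2.mem_iff.mp hae with rfl | rfl
    · exact p.fst_mem_support_of_mem_edges he
    · exact p.snd_mem_support_of_mem_edges he

lemma Reachable.exists_adj_walk_notMem_support {x : V} (h : G.Reachable v x) (hne : v ≠ x) :
    ∃ w, G.Adj v w ∧ ∃ q : G.Walk w x, v ∉ q.support := by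
  classical
  obtain ⟨p, hp⟩ := h.some.toPath
  cases p with
  | nil => exact absurd rfl hne
  | cons hvw q => exact ⟨_, hvw, q, ((Walk.cons_isPath_iff hvw q).mp hp).2⟩

lemma delEdge_le : delEdge G u v ≤ G :=
  deleteEdges_le _

lemma IsAcyclic.not_reachable_delEdge (hG : G.IsAcyclic) {w : V} (hvw : G.Adj v w) :
    ¬ (delEdge G v w).Reachable v w :=
  isBridge_iff.mp (isAcyclic_iff_forall_adj_isBridge.mp hG hvw)

lemma Walk.support_subset_sdiff_of_notMem_support
    (hC : C = ((delEdge G u v).connectedComponentMk v).supp) {x y : V}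
    (p : G.Walk x y) (hy : y ∈ C) (hv : v ∉ p.support) :
    ∀ z ∈ p.support, z ∈ {x | x ∈ C ∧ x ≠ v} := by
  classical
  subst hC
  intro z hz
  refine ⟨?_, fun hzv ↦ hv (hzv ▸ hz)⟩
  have hzy : (delEdge G u v).Reachable z y :=
    (p.dropUntil z hz).reachable_deleteEdges_of_notMem_support
      (fun hv' ↦ hv (p.support_dropUntil_subset_support hz hv')) (Sym2.mem_mk_right u v)
  rw [ConnectedComponent.mem_supp_iff] at hy ⊢
  exact (ConnectedComponent.eq.mpr hzy).trans hy

lemma exists_adj_connectedComponentMk_eq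
    (hC : C = ((delEdge G u v).connectedComponentMk v).supp)
    (K : (G.induce {x | x ∈ C ∧ x ≠ v}).ConnectedComponent) :
    ∃ w, ∃ hw : w ∈ {x | x ∈ C ∧ x ≠ v}, G.Adj v w ∧
      (G.induce {x | x ∈ C ∧ x ≠ v}).connectedComponentMk ⟨w, hw⟩ = K := by
  obtain ⟨⟨x, hxC, hxv⟩, rfl⟩ := K.exists_rep
  have hvx : (delEdge G u v).Reachable v x := by
    subst hC
    exact (ConnectedComponent.eq.mp ((ConnectedComponent.mem_supp_iff _ _).mp hxC)).symm
  obtain ⟨w, hvw, q, hq⟩ := hvx.exists_adj_walk_notMem_support (Ne.symm hxv)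
  have hqS := (q.mapLe delEdge_le).support_subset_sdiff_of_notMem_support hC hxC
    (by rwa [Walk.support_mapLe_eq_support])
  refine ⟨w, hqS w (Walk.start_mem_support _), delEdge_le hvw, ?_⟩
  exact ConnectedComponent.eq.mpr ((q.mapLe delEdge_le).induce _ hqS).reachable

lemma supp_delEdge_eq_image_supp_induce (hG : G.IsAcyclic)
    (hC : C = ((delEdge G u v).connectedComponentMk v).supp) {w : V} (hvw : G.Adj v w)
    (hw : w ∈ {x | x ∈ C ∧ x ≠ v}) :
    ((delEdge G v w).connectedComponentMk w).supp =
      Subtype.val '' ((G.induce {x | x ∈ C ∧ x ≠ v}).connectedComponentMk ⟨w, hw⟩).supp := by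
  classical
  ext y
  simp only [ConnectedComponent.mem_supp_iff, ConnectedComponent.eq, Set.mem_image]
  constructor
  · rintro ⟨r⟩
    have hvr : v ∉ r.support := fun hv ↦ hG.not_reachable_delEdge hvw ⟨r.dropUntil v hv⟩
    have hrS := (r.mapLe delEdge_le).support_subset_sdiff_of_notMem_support hC hw.1
      (by rwa [Walk.support_mapLe_eq_support])
    exact ⟨_, ((r.mapLe delEdge_le).induce _ hrS).reachable, rfl⟩
  · rintro ⟨z, ⟨p⟩, rfl⟩
    have hvp : v ∉ (p.map (Embedding.induce _).toHom).support := by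
      simp only [Walk.support_map, List.mem_map, not_exists, not_and]
      exact fun x _ hxv ↦ x.2.2 hxv
    exact (p.map _).reachable_deleteEdges_of_notMem_support hvp (Sym2.mem_mk_left v w)

end SimpleGraph

open SimpleGraph

theorem balanced_edge_endpoint_is_centroid_general {V : Type*} [Fintype V]
    (G : SimpleGraph V) (hG : G.IsTree)
    (u v : V)
    (hbal : ∀ a b : V, G.Adj a b → cutWeight G u v ≤ cutWeight G a b)
    (C : Set V) (hC : C = ((delEdge G u v).connectedComponentMk v).supp)
    (hbig : 2 * Fintype.card V ≤ 3 * C.ncard) :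
    ∀ K : (G.induce {x : V | x ∈ C ∧ x ≠ v}).ConnectedComponent,
      2 * K.supp.ncard ≤ C.ncard := by
  intro K
  obtain ⟨w, hw, hvw, rfl⟩ := exists_adj_connectedComponentMk_eq hC K
  have hvC : v ∈ C := hC ▸ rfl
  have hKC := ConnectedComponent.ncard_supp_lt_ncard
    ⟨fun _ hx ↦ hx.1, fun h ↦ (h hvC).2 rfl⟩ ((G.induce _).connectedComponentMk ⟨w, hw⟩)
  have hsides := ncard_supp_add_ncard_supp_le (hG.isAcyclic.not_reachable_delEdge hvw)
  have hcut : C.ncard ≤ cutWeight G v w := hC ▸ (le_max_right _ _).trans (hbal v w hvw)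
  rw [cutWeight] at hcut
  rw [supp_delEdge_eq_image_supp_induce hG.isAcyclic hC hvw hw,
    Set.ncard_image_of_injective _ Subtype.val_injective] at hcut hsides
  rw [Nat.card_eq_fintype_card] at hsides
  omega

/-- Let `uv` be a balanced edge of a tree `G` on `n` vertices, let `C` be a
largest component of `G \ uv` and `v` its endpoint lying in `C`.
If `|C| ≥ 2n/3` then `v` is a centroid of `C`. -/
theorem balanced_edge_endpoint_is_centroid {V : Type*} [Fintype V]
    (G : SimpleGraph V) (hG : G.IsTree)
    (u v : V) (huv : G.Adj u v)
    (hbal : ∀ a b : V, G.Adj a b → cutWeight G u v ≤ cutWeight G a b)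
    (C : Set V) (hC : C = ((delEdge G u v).connectedComponentMk v).supp)
    (hlarge : ((delEdge G u v).connectedComponentMk u).supp.ncard ≤ C.ncard)
    (hbig : 2 * Fintype.card V ≤ 3 * C.ncard) :
    ∀ K : (G.induce {x : V | x ∈ C ∧ x ≠ v}).ConnectedComponent,
      2 * K.supp.ncard ≤ C.ncard :=
  balanced_edge_endpoint_is_centroid_general G hG u v hbal C hC hbig
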